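/- The PF-D0 coefficient function b6 satisfies lim_{v→0⁺} b6(v) = −253491379/4435200 and lim_{v→0⁺} (b6(v) − (−253491379/4435200))/v² = 16301796103/1153152000; in particular b6 tends to the corresponding coefficient of the classical Quinlan–Tremaine method as v → 0. -/

import Mathlib

open Filter

/-- The variable coefficient `b₁(v)` of the phase-fitted method PF-D0. -/
noncomputable def pfb1 (v : ℝ) : ℝ :=
  (((-124184636) * Real.cos v + 70378348 * Real.cos (2 * v) - 24862148 * Real.cos (3 * v)
        + 5153611 * Real.cos (4 * v)) * v ^ 2
      + 25 * (3013169 * v ^ 2 - 16128 * Real.cos (3 * v) + 32256 * Real.cos (4 * v)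
        - 32256 * Real.cos (5 * v) + 16128 * Real.cos (6 * v)))
    / (206438400 * v ^ 2 * (Real.sin (v / 2)) ^ 10)

/-- The variable coefficient `b₂(v)` of the phase-fitted method PF-D0. -/
noncomputable def pfb2 (v : ℝ) : ℝ :=
  (v ^ 2 * (159588050 * Real.cos v - 85350160 * Real.cos (2 * v)
        + 16708985 * Real.cos (3 * v) - 5153611 * Real.cos (5 * v))
      - 16 * (6496079 * v ^ 2 - 252000 * Real.cos (3 * v) + 504000 * Real.cos (4 * v)
        - 504000 * Real.cos (5 * v) + 252000 * Real.cos (6 * v)))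
    / (206438400 * v ^ 2 * (Real.sin (v / 2)) ^ 10)

/-- The variable coefficient `b₃(v)` of the phase-fitted method PF-D0. -/
noncomputable def pfb3 (v : ℝ) : ℝ :=
  (((-367257540) * Real.cos v + 183567900 * Real.cos (2 * v)
        - 16708985 * Real.cos (4 * v) + 24862148 * Real.cos (5 * v)) * v ^ 2
      + 81 * (3175117 * v ^ 2 - 224000 * Real.cos (3 * v) + 448000 * Real.cos (4 * v)
        - 448000 * Real.cos (5 * v) + 224000 * Real.cos (6 * v)))
    / (206438400 * v ^ 2 * (Real.sin (v / 2)) ^ 10)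

/-- The variable coefficient `b₄(v)` of the phase-fitted method PF-D0. -/
noncomputable def pfb4 (v : ℝ) : ℝ :=
  (30675810 * v ^ 2 * Real.cos v - 42958788 * v ^ 2
      + 75 * (161280 - 611893 * v ^ 2) * Real.cos (3 * v)
      + 140 * (152411 * v ^ 2 - 172800) * Real.cos (4 * v)
      + (24192000 - 17594587 * v ^ 2) * Real.cos (5 * v)
      - 12096000 * Real.cos (6 * v))
    / (51609600 * v ^ 2 * (Real.sin (v / 2)) ^ 10)

/-- The variable coefficient `b₅(v)` of the phase-fitted method PF-D0. -/
noncomputable def pfb5 (v : ℝ) : ℝ :=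
  ((-61351620) * v ^ 2 * Real.cos (2 * v) + 85936557 * v ^ 2
      + 30 * (6120959 * v ^ 2 - 1411200) * Real.cos (3 * v)
      + 25 * (3386880 - 3191761 * v ^ 2) * Real.cos (4 * v)
      + (62092318 * v ^ 2 - 84672000) * Real.cos (5 * v)
      + 42336000 * Real.cos (6 * v))
    / (103219200 * v ^ 2 * (Real.sin (v / 2)) ^ 10)

/-- The variable coefficient `b₆(v)` of the phase-fitted method PF-D0. -/
noncomputable def pfb6 (v : ℝ) : ℝ :=
  (((-171873114) * Real.cos v + 171835152 * Real.cos (2 * v)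
        - 257184477 * Real.cos (3 * v) + 103937264 * Real.cos (4 * v)
        - 75329225 * Real.cos (5 * v)) * v ^ 2
      + 50803200 * (Real.cos (3 * v) - 2 * Real.cos (4 * v)
        + 2 * Real.cos (5 * v) - Real.cos (6 * v)))
    / (103219200 * v ^ 2 * (Real.sin (v / 2)) ^ 10)

/-! The numerator of `pfb6` is `v² A(v) + B(v)` with cosine polynomials `A`, `B`, so it is an
even entire function `∑ dₙ v^(2n)` whose coefficients `d₀, …, d₅` cancel: it equals
`v¹² (d₆ + d₇ v² + O(v⁴))`. The denominator is `100800 v¹² sinc(v/2)¹⁰` with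
`sinc(v/2) = 1 - v²/24 + O(v⁴)`, so the limits are `d₆ / 100800` and `(d₇ + 10 d₆ / 24) / 100800`.
-/

open Filter Topology Finset Real
open scoped Nat

section EvenPowerSeries

variable {a : ℕ → ℝ} {f : ℝ → ℝ}

lemma HasSum.nat_add_div_pow_two_mul {v s : ℝ}
    (hs : HasSum (fun n => a n * v ^ (2 * n)) s) (hv : v ≠ 0) (k : ℕ) :
    HasSum (fun n => a (n + k) * v ^ (2 * n))
      ((s - ∑ i ∈ range k, a i * v ^ (2 * i)) / v ^ (2 * k)) := by
  refine (((hasSum_nat_add_iff' k).mpr hs).div_const (v ^ (2 * k))).congr_fun fun n => ?_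
  rw [mul_add, pow_add, mul_div_assoc, mul_div_cancel_right₀ _ (pow_ne_zero _ hv)]

lemma continuousAt_tsum_mul_pow_zero (ha : Summable a) :
    ContinuousAt (fun t : ℝ => ∑' n, a n * t ^ n) 0 := by
  have hcont : ContinuousOn (fun t : ℝ => ∑' n, a n * t ^ n) (Set.Icc (-1) 1) := by
    refine continuousOn_tsum (fun n => by fun_prop) ha.abs fun n t ht => ?_
    rw [norm_mul, Real.norm_eq_abs, norm_pow]
    exact mul_le_of_le_one_right (abs_nonneg _) (pow_le_one₀ (norm_nonneg t) (abs_le.mpr ht))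
  exact hcont.continuousAt (Icc_mem_nhds (by norm_num) (by norm_num))

lemma tendsto_of_hasSum_mul_pow_two_mul (ha : Summable a)
    (hf : ∀ᶠ v in 𝓝[≠] 0, HasSum (fun n => a n * v ^ (2 * n)) (f v)) :
    Tendsto f (𝓝[≠] 0) (𝓝 (a 0)) := by
  have hsq : Tendsto (fun v : ℝ => v ^ 2) (𝓝[≠] 0) (𝓝 0) :=
    ((continuous_pow 2).tendsto' 0 0 (zero_pow two_ne_zero)).mono_left nhdsWithin_le_nhds
  have hg := (continuousAt_tsum_mul_pow_zero ha).tendsto.comp hsq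
  have h0 : ∑' n, a n * (0 : ℝ) ^ n = a 0 := by
    rw [tsum_eq_single 0 fun n hn => by simp [hn], pow_zero, mul_one]
  rw [h0] at hg
  refine hg.congr' ?_
  filter_upwards [hf] with v hv
  simp only [Function.comp_apply, ← pow_mul, hv.tsum_eq]

lemma tendsto_sub_div_sq_of_hasSum_mul_pow_two_mul (ha : Summable a)
    (hf : ∀ᶠ v in 𝓝[≠] 0, HasSum (fun n => a n * v ^ (2 * n)) (f v)) :
    Tendsto (fun v => (f v - a 0) / v ^ 2) (𝓝[≠] 0) (𝓝 (a 1)) := by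
  refine tendsto_of_hasSum_mul_pow_two_mul (a := fun n => a (n + 1))
    ((summable_nat_add_iff 1).mpr ha) ?_
  filter_upwards [hf, self_mem_nhdsWithin] with v hv hv0
  simpa using hv.nat_add_div_pow_two_mul hv0 1

end EvenPowerSeries

section SecondOrder

variable {α : Type*} {l : Filter α} {g Q : α → ℝ} {q : ℝ}

lemma tendsto_pow_sub_one_div (hQ : Tendsto Q l (𝓝 1))
    (hQ' : Tendsto (fun x => (Q x - 1) / g x) l (𝓝 q)) (m : ℕ) :
    Tendsto (fun x => (Q x ^ m - 1) / g x) l (𝓝 (m * q)) := by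
  have hsum : Tendsto (fun x => ∑ i ∈ range m, Q x ^ i) l (𝓝 (∑ i ∈ range m, (1 : ℝ) ^ i)) :=
    tendsto_finsetSum _ fun i _ => hQ.pow i
  simp only [one_pow, sum_const, card_range, nsmul_eq_mul, mul_one] at hsum
  simpa only [← geom_sum_mul, mul_div_assoc] using hsum.mul hQ'

lemma tendsto_div_const_mul_pow_sub_div {P : α → ℝ} {p p' c : ℝ} (hc : c ≠ 0) (m : ℕ)
    (hQ : Tendsto Q l (𝓝 1)) (hP' : Tendsto (fun x => (P x - p) / g x) l (𝓝 p'))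
    (hQ' : Tendsto (fun x => (Q x - 1) / g x) l (𝓝 q)) :
    Tendsto (fun x => (P x / (c * Q x ^ m) - p / c) / g x) l (𝓝 ((p' - p * (m * q)) / c)) := by
  have hden : Tendsto (fun x => c * Q x ^ m) l (𝓝 c) := by
    simpa using (hQ.pow m).const_mul c
  refine ((hP'.sub ((tendsto_pow_sub_one_div hQ hQ' m).const_mul p)).div hden hc).congr' ?_
  filter_upwards [hQ.eventually_ne one_ne_zero] with x hx
  simp only [Pi.div_apply]
  field_simp
  ring

end SecondOrder

noncomputable def cosPolyCoeff {m : ℕ} (w : Fin m → ℝ) (n : ℕ) : ℝ :=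
  (-1) ^ n / (2 * n)! * ∑ k, w k * ((k : ℕ) : ℝ) ^ (2 * n)

lemma hasSum_cosPolyCoeff {m : ℕ} (w : Fin m → ℝ) (v : ℝ) :
    HasSum (fun n => cosPolyCoeff w n * v ^ (2 * n)) (∑ k, w k * cos ((k : ℕ) * v)) := by
  refine (hasSum_sum fun (k : Fin m) _ => (hasSum_cos ((k : ℕ) * v)).mul_left (w k)).congr_fun
    fun n => ?_
  simp only [cosPolyCoeff, mul_sum, sum_mul, mul_pow]
  exact sum_congr rfl fun k _ => by ring

lemma hasSum_sinc_half {v : ℝ} (hv : v ≠ 0) :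
    HasSum (fun n => (-1) ^ n / (4 ^ n * (2 * n + 1)!) * v ^ (2 * n)) (sinc (v / 2)) := by
  rw [sinc_of_ne_zero (div_ne_zero hv two_ne_zero)]
  refine ((hasSum_sin (v / 2)).div_const (v / 2)).congr_fun fun n => ?_
  rw [pow_succ, div_pow, pow_mul 2, show (2 : ℝ) ^ 2 = 4 by norm_num]
  field_simp

def pfb6WeightsSq : Fin 6 → ℝ := ![0, -171873114, 171835152, -257184477, 103937264, -75329225]

def pfb6Weights : Fin 7 → ℝ := ![0, 0, 0, 50803200, -101606400, 101606400, -50803200]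

noncomputable def pfb6Num (v : ℝ) : ℝ :=
  v ^ 2 * ∑ k, pfb6WeightsSq k * cos ((k : ℕ) * v) + ∑ k, pfb6Weights k * cos ((k : ℕ) * v)

noncomputable def pfb6NumCoeff : ℕ → ℝ
  | 0 => cosPolyCoeff pfb6Weights 0
  | n + 1 => cosPolyCoeff pfb6WeightsSq n + cosPolyCoeff pfb6Weights (n + 1)

lemma hasSum_pfb6NumCoeff (v : ℝ) :
    HasSum (fun n => pfb6NumCoeff n * v ^ (2 * n)) (pfb6Num v) := by
  have hsq := (hasSum_cosPolyCoeff pfb6WeightsSq v).mul_left (v ^ 2)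
  have hshift := (hasSum_nat_add_iff' 1).mpr (hasSum_cosPolyCoeff pfb6Weights v)
  refine (hasSum_nat_add_iff' 1).mp ?_
  convert! hsq.add hshift using 1
  · funext n; simp only [pfb6NumCoeff]; ring
  · simp only [pfb6Num, pfb6NumCoeff, range_one, sum_singleton, mul_zero, pow_zero, mul_one]
    ring

lemma pfb6NumCoeff_eq_zero {n : ℕ} (hn : n < 6) : pfb6NumCoeff n = 0 := by
  interval_cases n <;> norm_num [pfb6NumCoeff, cosPolyCoeff, pfb6Weights, pfb6WeightsSq,
    Fin.sum_univ_succ, Nat.factorial]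

lemma pfb6NumCoeff_six : pfb6NumCoeff 6 = -253491379 / 44 := by
  norm_num [pfb6NumCoeff, cosPolyCoeff, pfb6Weights, pfb6WeightsSq, Fin.sum_univ_succ,
    Nat.factorial]

lemma pfb6NumCoeff_seven : pfb6NumCoeff 7 = 32822521621 / 8580 := by
  norm_num [pfb6NumCoeff, cosPolyCoeff, pfb6Weights, pfb6WeightsSq, Fin.sum_univ_succ,
    Nat.factorial]

lemma pfb6_eq_div_sinc {v : ℝ} (hv : v ≠ 0) :
    pfb6 v = pfb6Num v / v ^ 12 / (100800 * sinc (v / 2) ^ 10) := by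
  rw [sinc_of_ne_zero (div_ne_zero hv two_ne_zero), pfb6]
  by_cases hs : sin (v / 2) = 0
  · simp [hs]
  norm_num [pfb6Num, pfb6Weights, pfb6WeightsSq, Fin.sum_univ_succ]
  field_simp
  ring

lemma hasSum_pfb6Num_div_pow {v : ℝ} (hv : v ≠ 0) :
    HasSum (fun n => pfb6NumCoeff (n + 6) * v ^ (2 * n)) (pfb6Num v / v ^ 12) := by
  have hlow : ∑ i ∈ range 6, pfb6NumCoeff i * v ^ (2 * i) = 0 :=
    sum_eq_zero fun i hi => by rw [pfb6NumCoeff_eq_zero (mem_range.mp hi), zero_mul]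
  simpa [hlow] using (hasSum_pfb6NumCoeff v).nat_add_div_pow_two_mul hv 6

lemma summable_pfb6NumCoeff_add_six : Summable fun n => pfb6NumCoeff (n + 6) := by
  simpa using (hasSum_pfb6Num_div_pow one_ne_zero).summable

lemma tendsto_pfb6Num_div_pow :
    Tendsto (fun v => pfb6Num v / v ^ 12) (𝓝[≠] 0) (𝓝 (-253491379 / 44)) := by
  rw [← pfb6NumCoeff_six]
  exact tendsto_of_hasSum_mul_pow_two_mul summable_pfb6NumCoeff_add_six
    (eventually_nhdsWithin_of_forall fun _ => hasSum_pfb6Num_div_pow)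

lemma tendsto_pfb6Num_div_pow_sub_div_sq :
    Tendsto (fun v => (pfb6Num v / v ^ 12 - -253491379 / 44) / v ^ 2) (𝓝[≠] 0)
      (𝓝 (32822521621 / 8580)) := by
  rw [← pfb6NumCoeff_six, ← pfb6NumCoeff_seven]
  exact tendsto_sub_div_sq_of_hasSum_mul_pow_two_mul summable_pfb6NumCoeff_add_six
    (eventually_nhdsWithin_of_forall fun _ => hasSum_pfb6Num_div_pow)

lemma tendsto_sinc_half : Tendsto (fun v => sinc (v / 2)) (𝓝[≠] 0) (𝓝 1) :=
  ((continuous_sinc.comp (continuous_id.div_const 2)).tendsto' 0 1 (by simp)).mono_left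
    nhdsWithin_le_nhds

lemma tendsto_sinc_half_sub_one_div_sq :
    Tendsto (fun v => (sinc (v / 2) - 1) / v ^ 2) (𝓝[≠] 0) (𝓝 (-1 / 24)) := by
  have hsum : Summable fun n : ℕ => (-1 : ℝ) ^ n / (4 ^ n * (2 * n + 1)!) := by
    simpa using (hasSum_sinc_half one_ne_zero).summable
  convert tendsto_sub_div_sq_of_hasSum_mul_pow_two_mul hsum
    (eventually_nhdsWithin_of_forall fun _ => hasSum_sinc_half) using 4 <;> norm_num

/-- The PF-D0 coefficient `pfb6` tends to the corresponding classical
Quinlan–Tremaine coefficient as `v → 0⁺`, with the stated `v²`-Taylor coefficient. -/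
theorem pfd0_b6_limit :
    Tendsto pfb6 (nhdsWithin 0 (Set.Ioi 0)) (nhds (-253491379 / 4435200)) ∧
    Tendsto (fun v : ℝ => (pfb6 v - (-253491379 / 4435200)) / v ^ 2)
      (nhdsWithin 0 (Set.Ioi 0)) (nhds (16301796103 / 1153152000)) := by
  have hright : 𝓝[>] (0 : ℝ) ≤ 𝓝[≠] 0 := nhdsWithin_mono _ fun v hv => ne_of_gt hv
  have heq : ∀ᶠ v in 𝓝[>] 0, pfb6Num v / v ^ 12 / (100800 * sinc (v / 2) ^ 10) = pfb6 v :=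
    eventually_nhdsWithin_of_forall fun v hv => (pfb6_eq_div_sinc (ne_of_gt hv)).symm
  constructor
  · have h := tendsto_pfb6Num_div_pow.div ((tendsto_sinc_half.pow 10).const_mul 100800)
      (by norm_num)
    rw [show (-253491379 / 44 : ℝ) / (100800 * 1 ^ 10) = -253491379 / 4435200 by norm_num] at h
    exact (h.mono_left hright).congr' heq
  · have h := tendsto_div_const_mul_pow_sub_div (c := 100800) (by norm_num) 10 tendsto_sinc_half
      tendsto_pfb6Num_div_pow_sub_div_sq tendsto_sinc_half_sub_one_div_sq
    rw [show (-253491379 / 44 : ℝ) / 100800 = -253491379 / 4435200 by norm_num,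
      show (32822521621 / 8580 - -253491379 / 44 * ((10 : ℕ) * (-1 / 24)) : ℝ) / 100800
        = 16301796103 / 1153152000 by norm_num] at h
    exact (h.mono_left hright).congr' (heq.mono fun v hv => by rw [hv])
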